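/- arXiv:2503.15786 — 2 statements merged into one kernel-verified Lean document; each statement's English description precedes it below -/
import Mathlib

section
/- Uniform-norm stability of the quasi-interpolation: for every h > 0 and every bounded function f : ℝ → ℝ, sup_{x ∈ ℝ} |(I_b f)(x)| ≤ (3/2) · sup_{x ∈ ℝ} |f(x)|. -/
open scoped BigOperators Classical

/-- Quadratic (and general degree) B-spline basis functions on the uniform knot
sequence `s_j = j*h`, defined by the Cox–de Boor recursion. -/
noncomputable def Nspl (h : ℝ) : ℕ → ℤ → ℝ → ℝ
  | 0 => fun j s => if (j : ℝ) * h ≤ s ∧ s < ((j : ℝ) + 1) * h then 1 else 0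
  | d + 1 => fun j s =>
      (s - (j : ℝ) * h) / (((d : ℝ) + 1) * h) * Nspl h d j s
      + ((((j : ℝ) + (d : ℝ) + 2) * h - s) / (((d : ℝ) + 1) * h)) * Nspl h d (j + 1) s

/-- The quasi-interpolation coefficients `(α₀, α₁, α₂) = (−1/8, 5/4, −1/8)`. -/
noncomputable def alphaC : Fin 3 → ℝ := ![-(1/8), 5/4, -(1/8)]

/-- The quasi-interpolation coefficient functional
`μ_j(f) = α₀ f(τ_j⁰) + α₁ f(τ_j¹) + α₂ f(τ_j²)` with `τ_j^k = (j+k+1/2)h`. -/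
noncomputable def muQ (h : ℝ) (f : ℝ → ℝ) (j : ℤ) : ℝ :=
  ∑ k : Fin 3, alphaC k * f (((j : ℝ) + ((k : ℕ) : ℝ) + 1 / 2) * h)

/-- The quadratic B-spline quasi-interpolation operator `I_b f = Σ_j μ_j(f) N_j`. -/
noncomputable def IbQ (h : ℝ) (f : ℝ → ℝ) (x : ℝ) : ℝ :=
  ∑' j : ℤ, muQ h f j * Nspl h 2 j x

/-- The `W^{3,∞}(ℝ)` norm: maximum over `0 ≤ m ≤ 3` of `sup_x |u^{(m)}(x)|`. -/
noncomputable def W3norm (u : ℝ → ℝ) : ℝ :=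
  ⨆ p : ℝ × Fin 4, |iteratedDeriv (p.2 : ℕ) u p.1|

/-- Tensor-product quadratic B-spline. -/
noncomputable def Bspl2 (h : ℝ) (i : ℤ × ℤ) (p : ℝ × ℝ) : ℝ :=
  Nspl h 2 i.1 p.1 * Nspl h 2 i.2 p.2

/-- Tensor-product quasi-interpolation coefficient functional. -/
noncomputable def muQ2 (h : ℝ) (f : ℝ × ℝ → ℝ) (i : ℤ × ℤ) : ℝ :=
  ∑ k : Fin 3, ∑ l : Fin 3, alphaC k * alphaC l *
    f (((i.1 : ℝ) + ((k : ℕ) : ℝ) + 1 / 2) * h, ((i.2 : ℝ) + ((l : ℕ) : ℝ) + 1 / 2) * h)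

/-- Tensor-product quadratic B-spline quasi-interpolation. -/
noncomputable def IbQ2 (h : ℝ) (f : ℝ × ℝ → ℝ) (p : ℝ × ℝ) : ℝ :=
  ∑' i : ℤ × ℤ, muQ2 h f i * Bspl2 h i p

/-- The `W^{3,∞}(ℝ²)` norm: maximum over partial derivatives of total order ≤ 3 of their sup. -/
noncomputable def W3norm2 (f : ℝ × ℝ → ℝ) : ℝ :=
  ⨆ p : (ℝ × ℝ) × Fin 4, ‖iteratedFDeriv ℝ (p.2 : ℕ) f p.1‖

lemma nspl_succ (h : ℝ) (d : ℕ) (j : ℤ) (s : ℝ) :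
    Nspl h (d+1) j s = (s - (j : ℝ) * h) / (((d : ℝ) + 1) * h) * Nspl h d j s
      + ((((j : ℝ) + (d : ℝ) + 2) * h - s) / (((d : ℝ) + 1) * h)) * Nspl h d (j + 1) s := rfl

lemma nspl0_eq (h : ℝ) (hh : 0 < h) (j : ℤ) (x : ℝ) :
    Nspl h 0 j x = if j = ⌊x/h⌋ then 1 else 0 := by
  show (if (j : ℝ) * h ≤ x ∧ x < ((j : ℝ) + 1) * h then (1:ℝ) else 0) = _
  congr 1
  rw [eq_iff_iff, eq_comm, Int.floor_eq_iff, le_div_iff₀ hh, div_lt_iff₀ hh]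

lemma nspl2_eq (h : ℝ) (hh : 0 < h) (j : ℤ) (x : ℝ) :
    Nspl h 2 j x =
      (x/h - j)^2/2 * (if j = ⌊x/h⌋ then 1 else 0)
      + ((x/h - j)*((j:ℝ)+2 - x/h) + ((j:ℝ)+3 - x/h)*(x/h - j - 1))/2
          * (if j + 1 = ⌊x/h⌋ then 1 else 0)
      + ((j:ℝ)+3 - x/h)^2/2 * (if j + 2 = ⌊x/h⌋ then 1 else 0) := by
  have h2 : Nspl h 2 j x = _ := nspl_succ h 1 j x
  rw [h2, nspl_succ, nspl_succ]
  simp only [nspl0_eq h hh, show j + 1 + 1 = j + 2 from by ring]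
  push_cast
  set A := (if j = ⌊x/h⌋ then (1:ℝ) else 0) with hA
  set B := (if (j:ℤ)+1 = ⌊x/h⌋ then (1:ℝ) else 0) with hB
  set C := (if (j:ℤ)+2 = ⌊x/h⌋ then (1:ℝ) else 0) with hC
  field_simp
  ring

/-- uniform-norm stability of the quadratic B-spline quasi-interpolation:
for bounded `f`, `sup_x |(I_b f)(x)| ≤ (3/2)·sup_x |f(x)|`. -/
theorem stmt4 (h : ℝ) (hh : 0 < h) (f : ℝ → ℝ) (hf : ∃ M : ℝ, ∀ x : ℝ, |f x| ≤ M) :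
    ∀ x : ℝ, |IbQ h f x| ≤ (3 / 2) * ⨆ y : ℝ, |f y| := by
  obtain ⟨M0, hM0⟩ := hf
  have hbdd : BddAbove (Set.range fun y => |f y|) := ⟨M0, by rintro _ ⟨y, rfl⟩; exact hM0 y⟩
  set M : ℝ := ⨆ y : ℝ, |f y| with hMdef
  have hM : ∀ y : ℝ, |f y| ≤ M := fun y => le_ciSup hbdd y
  have hmu : ∀ j : ℤ, |muQ h f j| ≤ 3 / 2 * M := by
    intro j
    have e0 := hM (((j : ℝ) + 0 + 1 / 2) * h)
    have e1 := hM (((j : ℝ) + 1 + 1 / 2) * h)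
    have e2 := hM (((j : ℝ) + 2 + 1 / 2) * h)
    rw [abs_le] at e0 e1 e2 ⊢
    rw [muQ, Fin.sum_univ_three]
    norm_num [alphaC, Matrix.cons_val_two, Matrix.vecHead, Matrix.vecTail] at e0 e1 e2 ⊢
    constructor <;> nlinarith [e0.1, e0.2, e1.1, e1.2, e2.1, e2.2]
  intro x
  set n : ℤ := ⌊x / h⌋ with hn
  obtain ⟨u, hu0, hu1, hx⟩ : ∃ u : ℝ, 0 ≤ u ∧ u < 1 ∧ x / h = (n : ℝ) + u := by
    refine ⟨x / h - n, ?_, ?_, by ring⟩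
    · have := Int.floor_le (x / h); rw [← hn] at this; linarith
    · have := Int.lt_floor_add_one (x / h); rw [← hn] at this; linarith
  have cA : Nspl h 2 n x = u ^ 2 / 2 := by
    rw [nspl2_eq h hh, if_pos rfl, if_neg (by omega), if_neg (by omega), hx]; push_cast; ring
  have cB : Nspl h 2 (n - 1) x = (1 + 2 * u - 2 * u ^ 2) / 2 := by
    rw [nspl2_eq h hh, if_neg (by omega), if_pos (by omega), if_neg (by omega), hx]
    push_cast; ring
  have cC : Nspl h 2 (n - 2) x = (1 - u) ^ 2 / 2 := by
    rw [nspl2_eq h hh, if_neg (by omega), if_neg (by omega), if_pos (by omega), hx]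
    push_cast; ring
  have czero : ∀ j ∉ ({n - 2, n - 1, n} : Finset ℤ), muQ h f j * Nspl h 2 j x = 0 := by
    intro j hj
    simp only [Finset.mem_insert, Finset.mem_singleton] at hj
    push_neg at hj
    rw [nspl2_eq h hh, if_neg (by omega), if_neg (by omega), if_neg (by omega)]
    ring
  have hsum : IbQ h f x = muQ h f (n - 2) * Nspl h 2 (n - 2) x
      + muQ h f (n - 1) * Nspl h 2 (n - 1) x + muQ h f n * Nspl h 2 n x := by
    rw [IbQ, tsum_eq_sum czero]
    rw [Finset.sum_insert (by simp only [Finset.mem_insert, Finset.mem_singleton]; omega),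
      Finset.sum_insert (by simp only [Finset.mem_singleton]; omega), Finset.sum_singleton]
    ring
  rw [hsum, cA, cB, cC]
  have nA : 0 ≤ u ^ 2 / 2 := by positivity
  have nB : 0 ≤ (1 + 2 * u - 2 * u ^ 2) / 2 := by
    nlinarith [mul_nonneg hu0 (by linarith : (0:ℝ) ≤ 1 - u)]
  have nC : 0 ≤ (1 - u) ^ 2 / 2 := by positivity
  have b1 := hmu (n - 2); have b2 := hmu (n - 1); have b3 := hmu n
  calc |muQ h f (n - 2) * ((1 - u) ^ 2 / 2) + muQ h f (n - 1) * ((1 + 2 * u - 2 * u ^ 2) / 2)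
        + muQ h f n * (u ^ 2 / 2)|
      ≤ |muQ h f (n - 2) * ((1 - u) ^ 2 / 2)| + |muQ h f (n - 1) * ((1 + 2 * u - 2 * u ^ 2) / 2)|
        + |muQ h f n * (u ^ 2 / 2)| := by
        exact (abs_add_le _ _).trans (add_le_add_left (abs_add_le _ _) _)
    _ = |muQ h f (n - 2)| * ((1 - u) ^ 2 / 2) + |muQ h f (n - 1)| * ((1 + 2 * u - 2 * u ^ 2) / 2)
        + |muQ h f n| * (u ^ 2 / 2) := by
        rw [abs_mul, abs_mul, abs_mul, abs_of_nonneg nA, abs_of_nonneg nB, abs_of_nonneg nC]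
    _ ≤ 3 / 2 * M * ((1 - u) ^ 2 / 2) + 3 / 2 * M * ((1 + 2 * u - 2 * u ^ 2) / 2)
        + 3 / 2 * M * (u ^ 2 / 2) := by
        gcongr
    _ = 3 / 2 * M := by ring
end

section
/- Error estimate for the modified quasi-interpolation away from the interface (Theorem 2, univariate uniform case): there exists a constant C > 0, independent of h, κ, x*, f̄_0, f̄_1, such that for every mesh element ω_i = [ih, (i+1)h] with i ∉ {κ − 1, κ}, sup_{x ∈ ω_i} |f(x) − (I_b^* f)(x)| ≤ C · h³ · max(‖f̄_0‖_{W^{3,∞}(ℝ)}, ‖f̄_1‖_{W^{3,∞}(ℝ)}). -/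
open scoped BigOperators Classical

/-- The modified quasi-interpolation `I_b^* f = Σ_j μ_j^* N_j`, where
`μ_j^* = μ_j(f̄₀)` if `supp N_j ⊆ (−∞, (κ+1)h]` (i.e. `j ≤ κ − 2`) and
`μ_j^* = μ_j(f̄₁)` otherwise. -/
noncomputable def IbStar1 (h : ℝ) (κ : ℤ) (f0 f1 : ℝ → ℝ) (x : ℝ) : ℝ :=
  ∑' j : ℤ, (if j ≤ κ - 2 then muQ h f0 j else muQ h f1 j) * Nspl h 2 j x

variable {h x : ℝ} {i : ℤ}

lemma N0_eq (hh : 0 < h) (hx1 : (i:ℝ)*h ≤ x) (hx2 : x < ((i:ℝ)+1)*h) (m : ℤ) :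
    Nspl h 0 m x = if m = i then 1 else 0 := by
  simp only [Nspl]
  by_cases hm : m = i
  · subst hm; rw [if_pos ⟨hx1, hx2⟩, if_pos rfl]
  · rw [if_neg, if_neg hm]
    rintro ⟨h1, h2⟩
    rcases lt_or_gt_of_ne hm with hlt | hgt
    · have : (m:ℝ) + 1 ≤ (i:ℝ) := by exact_mod_cast Int.add_one_le_iff.mpr hlt
      nlinarith
    · have : (i:ℝ) + 1 ≤ (m:ℝ) := by exact_mod_cast Int.add_one_le_iff.mpr hgt
      nlinarith

lemma N1_eq (hh : 0 < h) (hx1 : (i:ℝ)*h ≤ x) (hx2 : x < ((i:ℝ)+1)*h) (j : ℤ) :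
    Nspl h 1 j x = (x - (j:ℝ)*h)/h * (if j = i then 1 else 0)
      + (((j:ℝ)+2)*h - x)/h * (if j+1 = i then 1 else 0) := by
  show Nspl h (0+1) j x = _
  rw [Nspl]
  simp only [N0_eq hh hx1 hx2]
  push_cast
  ring_nf

lemma N2_eq (hh : 0 < h) (hx1 : (i:ℝ)*h ≤ x) (hx2 : x < ((i:ℝ)+1)*h) (j : ℤ) :
    Nspl h 2 j x = (x - (j:ℝ)*h)/(2*h) * ((x - (j:ℝ)*h)/h * (if j = i then 1 else 0)
        + (((j:ℝ)+2)*h - x)/h * (if j+1 = i then 1 else 0))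
      + (((j:ℝ)+3)*h - x)/(2*h) * ((x - ((j:ℝ)+1)*h)/h * (if j+1 = i then 1 else 0)
        + (((j:ℝ)+3)*h - x)/h * (if j+2 = i then 1 else 0)) := by
  show Nspl h (1+1) j x = _
  rw [Nspl]
  simp only [N1_eq hh hx1 hx2]
  push_cast
  ring_nf

lemma N2_i (hh : 0 < h) (hx1 : (i:ℝ)*h ≤ x) (hx2 : x < ((i:ℝ)+1)*h) :
    Nspl h 2 i x = (x - (i:ℝ)*h)^2/(2*h^2) := by
  rw [N2_eq hh hx1 hx2]
  rw [if_pos rfl, if_neg (by omega), if_neg (by omega)]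
  field_simp
  ring

lemma N2_i1 (hh : 0 < h) (hx1 : (i:ℝ)*h ≤ x) (hx2 : x < ((i:ℝ)+1)*h) :
    Nspl h 2 (i-1) x = ((x-((i:ℝ)-1)*h)*(((i:ℝ)+1)*h-x)
      + (((i:ℝ)+2)*h-x)*(x-(i:ℝ)*h))/(2*h^2) := by
  rw [N2_eq hh hx1 hx2]
  rw [if_neg (by omega), if_pos (by omega), if_neg (by omega)]
  push_cast
  field_simp
  ring

lemma N2_i2 (hh : 0 < h) (hx1 : (i:ℝ)*h ≤ x) (hx2 : x < ((i:ℝ)+1)*h) :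
    Nspl h 2 (i-2) x = (((i:ℝ)+1)*h - x)^2/(2*h^2) := by
  rw [N2_eq hh hx1 hx2]
  rw [if_neg (by omega), if_neg (by omega), if_pos (by omega)]
  push_cast
  field_simp
  ring

lemma N2_zero (hh : 0 < h) (hx1 : (i:ℝ)*h ≤ x) (hx2 : x < ((i:ℝ)+1)*h) (j : ℤ)
    (h1 : j ≠ i) (h2 : j ≠ i-1) (h3 : j ≠ i-2) : Nspl h 2 j x = 0 := by
  rw [N2_eq hh hx1 hx2]
  rw [if_neg h1, if_neg (by omega), if_neg (by omega)]
  ring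
open Set

lemma itDW_eq {n : ℕ} {f : ℝ → ℝ} (hf : ContDiff ℝ 3 f) (hn : n ≤ 3) {s : Set ℝ}
    (hs : UniqueDiffOn ℝ s) {x : ℝ} (hx : x ∈ s) :
    iteratedDerivWithin n f s x = iteratedDeriv n f x := by
  have h := (contDiff_iff_ftaylorSeries.mp hf).hasFTaylorSeriesUpToOn s
  rw [iteratedDerivWithin_eq_iteratedFDerivWithin, iteratedDeriv_eq_iteratedFDeriv,
    ← h.eq_iteratedFDerivWithin_of_uniqueDiffOn (by exact_mod_cast hn) hs hx]
  rfl

lemma taylor_aux {g : ℝ → ℝ} (hg : ContDiff ℝ 3 g) {M : ℝ}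
    (hM : ∀ t, |iteratedDeriv 3 g t| ≤ M) {x τ : ℝ} (hxτ : x < τ) :
    |g τ - (g x + deriv g x * (τ - x) + iteratedDeriv 2 g x * (τ - x)^2 / 2)|
      ≤ M * |τ - x|^3 / 6 := by
  have hud : UniqueDiffOn ℝ (Icc x τ) := uniqueDiffOn_Icc hxτ
  have hd3 : Differentiable ℝ (iteratedDeriv 2 g) := hg.differentiable_iteratedDeriv 2 (by norm_num)
  have hcd : ContDiffOn ℝ 2 g (Icc x τ) := (hg.of_le (by norm_num)).contDiffOn
  have hdiff : DifferentiableOn ℝ (iteratedDerivWithin 2 g (Icc x τ)) (Ioo x τ) := by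
    apply DifferentiableOn.congr (hd3.differentiableOn)
    intro y hy
    exact itDW_eq hg (by norm_num) hud (Ioo_subset_Icc_self hy)
  obtain ⟨x', hx', heq⟩ := taylor_mean_remainder_lagrange (n := 2) hxτ.ne
    (by rw [uIcc_of_le hxτ.le]; exact_mod_cast hcd)
    (by rw [uIcc_of_le hxτ.le, uIoo_of_le hxτ.le]; exact hdiff)
  rw [uIoo_of_le hxτ.le] at hx'
  rw [uIcc_of_le hxτ.le] at heq
  have h3 : iteratedDerivWithin 3 g (Icc x τ) x' = iteratedDeriv 3 g x' :=
    itDW_eq hg le_rfl hud (Ioo_subset_Icc_self hx')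
  have hT : taylorWithinEval g 2 (Icc x τ) x τ
      = g x + deriv g x * (τ - x) + iteratedDeriv 2 g x * (τ - x)^2 / 2 := by
    rw [taylor_within_apply]
    have hx0 : x ∈ Icc x τ := ⟨le_rfl, hxτ.le⟩
    rw [Finset.sum_range_succ, Finset.sum_range_succ, Finset.sum_range_one]
    rw [itDW_eq hg (by norm_num) hud hx0, itDW_eq hg (by norm_num) hud hx0,
      itDW_eq hg (by norm_num) hud hx0]
    simp [iteratedDeriv_one]
    ring
  rw [hT] at heq
  have heq3 : g τ - (g x + deriv g x * (τ - x) + iteratedDeriv 2 g x * (τ - x) ^ 2 / 2) =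
      iteratedDeriv 3 g x' * (τ - x) ^ 3 / 6 := by
    rw [heq, ← h3]
    norm_num [Nat.factorial]
  rw [heq3, abs_div, abs_mul, abs_pow]
  norm_num
  have h1 : |iteratedDeriv 3 g x'| * |τ - x|^3 ≤ M * |τ - x|^3 :=
    mul_le_mul_of_nonneg_right (hM x') (by positivity)
  linarith

lemma taylor2_bound {g : ℝ → ℝ} (hg : ContDiff ℝ 3 g) {M : ℝ}
    (hM : ∀ t, |iteratedDeriv 3 g t| ≤ M) (x τ : ℝ) :
    |g τ - (g x + deriv g x * (τ - x) + iteratedDeriv 2 g x * (τ - x)^2 / 2)|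
      ≤ M * |τ - x|^3 / 6 := by
  have hM0 : 0 ≤ M := le_trans (abs_nonneg _) (hM 0)
  rcases lt_trichotomy x τ with hlt | heq | hgt
  · exact taylor_aux hg hM hlt
  · subst heq; simp
  · -- reflect
    have hg' : ContDiff ℝ 3 (fun t => g (-t)) := hg.comp (contDiff_neg)
    have hM' : ∀ t, |iteratedDeriv 3 (fun t => g (-t)) t| ≤ M := by
      intro t
      rw [iteratedDeriv_comp_neg]
      simpa [smul_eq_mul, abs_mul] using hM (-t)
    have := taylor_aux hg' hM' (x := -x) (τ := -τ) (by linarith)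
    have e1 : deriv (fun t => g (-t)) (-x) = - deriv g x := by
      rw [← iteratedDeriv_one, iteratedDeriv_comp_neg]
      simp [iteratedDeriv_one]
    have e2 : iteratedDeriv 2 (fun t => g (-t)) (-x) = iteratedDeriv 2 g x := by
      rw [iteratedDeriv_comp_neg]; simp
    rw [e1, e2] at this
    have e3 : |(-τ) - (-x)| = |τ - x| := by rw [abs_sub_comm]; congr 1; ring
    rw [e3] at this
    convert this using 2
    ring

section KEY
variable {h x : ℝ} {i : ℤ}

lemma repro (hh : 0 < h) (hx1 : (i:ℝ)*h ≤ x) (hx2 : x < ((i:ℝ)+1)*h)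
    {g p : ℝ → ℝ}
    (hp : p = fun t => g x + deriv g x * (t-x) + iteratedDeriv 2 g x * (t-x)^2/2) :
    muQ h p (i-2) * Nspl h 2 (i-2) x + muQ h p (i-1) * Nspl h 2 (i-1) x
      + muQ h p i * Nspl h 2 i x = g x := by
  rw [N2_i hh hx1 hx2, N2_i1 hh hx1 hx2, N2_i2 hh hx1 hx2]
  simp only [muQ, alphaC, Fin.sum_univ_three, hp]
  push_cast
  simp only [Fin.val_zero, Fin.val_one, Fin.val_two, Nat.cast_zero, Nat.cast_one, Nat.cast_ofNat]
  field_simp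
  ring

set_option maxHeartbeats 1000000 in
lemma key (hh : 0 < h) (hx1 : (i:ℝ)*h ≤ x) (hx2 : x < ((i:ℝ)+1)*h)
    {g : ℝ → ℝ} (hg : ContDiff ℝ 3 g) {M : ℝ} (hM : ∀ t, |iteratedDeriv 3 g t| ≤ M) :
    |g x - (muQ h g (i-2) * Nspl h 2 (i-2) x + muQ h g (i-1) * Nspl h 2 (i-1) x
      + muQ h g i * Nspl h 2 i x)| ≤ 4 * (h^3 * M) := by
  have hM0 : 0 ≤ M := le_trans (abs_nonneg _) (hM 0)
  obtain ⟨p, hpdef⟩ : ∃ p : ℝ → ℝ,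
      p = fun t => g x + deriv g x * (t-x) + iteratedDeriv 2 g x * (t-x)^2/2 := ⟨_, rfl⟩
  have hp : ∀ τ, |g τ - p τ| ≤ M * |τ - x|^3 / 6 := by
    intro τ; rw [hpdef]; exact taylor2_bound hg hM x τ
  have hτ : ∀ τ : ℝ, ((i:ℝ) - 3/2)*h ≤ τ → τ ≤ ((i:ℝ)+5/2)*h →
      |g τ - p τ| ≤ 125/48*(M*h^3) := by
    intro τ hτ1 hτ2
    have habs : |τ - x| ≤ 5/2*h := by
      rw [abs_le]; constructor <;> nlinarith
    have h2 : |τ - x|^3 ≤ (5/2*h)^3 := pow_le_pow_left₀ (abs_nonneg _) habs 3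
    calc |g τ - p τ| ≤ M * |τ - x|^3 / 6 := hp τ
      _ ≤ M * (5/2*h)^3 / 6 := by nlinarith
      _ = 125/48*(M*h^3) := by ring
  have hmu : ∀ j : ℤ, i-2 ≤ j → j ≤ i → |muQ h g j - muQ h p j| ≤ 125/32*(M*h^3) := by
    intro j hj1 hj2
    have hc1 : (i:ℝ) - 2 ≤ (j:ℝ) := by exact_mod_cast hj1
    have hc2 : (j:ℝ) ≤ (i:ℝ) := by exact_mod_cast hj2
    have e0 := hτ (((j:ℝ) + 0 + 1/2)*h) (by nlinarith) (by nlinarith)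
    have e1 := hτ (((j:ℝ) + 1 + 1/2)*h) (by nlinarith) (by nlinarith)
    have e2 := hτ (((j:ℝ) + 2 + 1/2)*h) (by nlinarith) (by nlinarith)
    have hrw : muQ h g j - muQ h p j
        = -(1/8)*(g (((j:ℝ) + 0 + 1/2)*h) - p (((j:ℝ) + 0 + 1/2)*h))
          + 5/4*(g (((j:ℝ) + 1 + 1/2)*h) - p (((j:ℝ) + 1 + 1/2)*h))
          + -(1/8)*(g (((j:ℝ) + 2 + 1/2)*h) - p (((j:ℝ) + 2 + 1/2)*h)) := by
      simp only [muQ, alphaC, Fin.sum_univ_three, Matrix.cons_val_zero, Matrix.cons_val_one,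
        Matrix.head_cons, Matrix.cons_val_two, Matrix.tail_cons]
      norm_num
      ring
    obtain ⟨l0, u0⟩ := abs_le.mp e0
    obtain ⟨l1, u1⟩ := abs_le.mp e1
    obtain ⟨l2, u2⟩ := abs_le.mp e2
    rw [hrw, abs_le]; constructor <;> linarith
  have hrepr := repro hh hx1 hx2 hpdef
  rw [N2_i hh hx1 hx2, N2_i1 hh hx1 hx2, N2_i2 hh hx1 hx2] at hrepr ⊢
  obtain ⟨n2, hn2def⟩ : ∃ v:ℝ, v = (((i:ℝ)+1)*h - x)^2/(2*h^2) := ⟨_, rfl⟩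
  obtain ⟨n1, hn1def⟩ : ∃ v:ℝ,
    v = ((x-((i:ℝ)-1)*h)*(((i:ℝ)+1)*h-x) + (((i:ℝ)+2)*h-x)*(x-(i:ℝ)*h))/(2*h^2) := ⟨_, rfl⟩
  obtain ⟨n0, hn0def⟩ : ∃ v:ℝ, v = (x - (i:ℝ)*h)^2/(2*h^2) := ⟨_, rfl⟩
  rw [← hn2def, ← hn1def, ← hn0def] at hrepr ⊢
  have hn2 : 0 ≤ n2 := by rw [hn2def]; positivity
  have hn0 : 0 ≤ n0 := by rw [hn0def]; positivity
  have hn1 : 0 ≤ n1 := by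
    rw [hn1def]
    have : 0 ≤ (x-((i:ℝ)-1)*h)*(((i:ℝ)+1)*h-x) + (((i:ℝ)+2)*h-x)*(x-(i:ℝ)*h) := by nlinarith
    positivity
  have hsum : n2 + n1 + n0 = 1 := by
    rw [hn2def, hn1def, hn0def]
    field_simp
    ring
  have hkey : g x - (muQ h g (i-2) * n2 + muQ h g (i-1) * n1 + muQ h g i * n0)
      = (muQ h p (i-2) - muQ h g (i-2)) * n2 + (muQ h p (i-1) - muQ h g (i-1)) * n1
        + (muQ h p i - muQ h g i) * n0 := by linear_combination -hrepr
  rw [hkey]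
  have b2 := hmu (i-2) (by omega) (by omega)
  have b1 := hmu (i-1) (by omega) (by omega)
  have b0 := hmu i (by omega) (by omega)
  obtain ⟨X, hXdef⟩ : ∃ v:ℝ, v = 125/32*(M*h^3) := ⟨_, rfl⟩
  rw [← hXdef] at b2 b1 b0
  obtain ⟨l2', u2'⟩ := abs_le.mp b2
  obtain ⟨l1', u1'⟩ := abs_le.mp b1
  obtain ⟨l0', u0'⟩ := abs_le.mp b0
  have q2u : (muQ h p (i-2) - muQ h g (i-2)) * n2 ≤ X * n2 :=
    mul_le_mul_of_nonneg_right (by linarith) hn2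
  have q2l : -(X * n2) ≤ (muQ h p (i-2) - muQ h g (i-2)) * n2 := by
    rw [← neg_mul]; exact mul_le_mul_of_nonneg_right (by linarith) hn2
  have q1u : (muQ h p (i-1) - muQ h g (i-1)) * n1 ≤ X * n1 :=
    mul_le_mul_of_nonneg_right (by linarith) hn1
  have q1l : -(X * n1) ≤ (muQ h p (i-1) - muQ h g (i-1)) * n1 := by
    rw [← neg_mul]; exact mul_le_mul_of_nonneg_right (by linarith) hn1
  have q0u : (muQ h p i - muQ h g i) * n0 ≤ X * n0 :=
    mul_le_mul_of_nonneg_right (by linarith) hn0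
  have q0l : -(X * n0) ≤ (muQ h p i - muQ h g i) * n0 := by
    rw [← neg_mul]; exact mul_le_mul_of_nonneg_right (by linarith) hn0
  have hXs : X * n2 + X * n1 + X * n0 = X := by linear_combination X * hsum
  have hX4 : X ≤ 4 * (h^3*M) := by rw [hXdef]; nlinarith [pow_nonneg hh.le 3]
  rw [abs_le]
  constructor <;> linarith
end KEY
section EXTRA
variable {h x : ℝ} {i : ℤ}

lemma tsum_red (hh : 0 < h) (hx1 : (i:ℝ)*h ≤ x) (hx2 : x < ((i:ℝ)+1)*h) (c : ℤ → ℝ) :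
    ∑' j : ℤ, c j * Nspl h 2 j x
      = c (i-2) * Nspl h 2 (i-2) x + c (i-1) * Nspl h 2 (i-1) x + c i * Nspl h 2 i x := by
  have hvan : ∀ j : ℤ, j ∉ ({i-2, i-1, i} : Finset ℤ) → c j * Nspl h 2 j x = 0 := by
    intro j hj
    simp only [Finset.mem_insert, Finset.mem_singleton] at hj
    push_neg at hj
    rw [N2_zero hh hx1 hx2 j hj.2.2 hj.2.1 hj.1, mul_zero]
  rw [tsum_eq_sum hvan]
  rw [Finset.sum_insert (by simp), Finset.sum_insert (by simp), Finset.sum_singleton]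
  ring

lemma final_est (hh : 0 < h) (hx1 : (i:ℝ)*h ≤ x) (hx2 : x < ((i:ℝ)+1)*h)
    {g : ℝ → ℝ} (hg : ContDiff ℝ 3 g) {M : ℝ} (hM : ∀ t, |iteratedDeriv 3 g t| ≤ M)
    (c : ℤ → ℝ) (hc2 : c (i-2) = muQ h g (i-2)) (hc1 : c (i-1) = muQ h g (i-1))
    (hc0 : c i = muQ h g i ∨ Nspl h 2 i x = 0) :
    |g x - ∑' j : ℤ, c j * Nspl h 2 j x| ≤ 4 * (h^3 * M) := by
  rw [tsum_red hh hx1 hx2 c, hc2, hc1]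
  rcases hc0 with hc0 | hz
  · rw [hc0]; exact key hh hx1 hx2 hg hM
  · have hk := key hh hx1 hx2 hg hM
    rw [hz, mul_zero] at hk ⊢
    exact hk
end EXTRA

lemma w3_le {g : ℝ → ℝ}
    (hb : ∀ m : ℕ, m ≤ 3 → ∃ M : ℝ, ∀ x : ℝ, |iteratedDeriv m g x| ≤ M) :
    ∀ t : ℝ, |iteratedDeriv 3 g t| ≤ W3norm g := by
  obtain ⟨M0, h0⟩ := hb 0 (by norm_num)
  obtain ⟨M1, h1⟩ := hb 1 (by norm_num)
  obtain ⟨M2, h2⟩ := hb 2 (by norm_num)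
  obtain ⟨M3, h3⟩ := hb 3 le_rfl
  have hbdd : BddAbove (Set.range fun p : ℝ × Fin 4 => |iteratedDeriv (p.2 : ℕ) g p.1|) := by
    refine ⟨max (max M0 M1) (max M2 M3), ?_⟩
    rintro y ⟨⟨t, m⟩, rfl⟩
    fin_cases m
    · exact (h0 t).trans ((le_max_left M0 M1).trans (le_max_left _ _))
    · exact (h1 t).trans ((le_max_right M0 M1).trans (le_max_left _ _))
    · exact (h2 t).trans ((le_max_left M2 M3).trans (le_max_right _ _))
    · exact (h3 t).trans ((le_max_right M2 M3).trans (le_max_right _ _))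
  intro t
  have := le_ciSup hbdd ((t, (3 : Fin 4)) : ℝ × Fin 4)
  simpa [W3norm] using this


/-- Theorem 2, univariate uniform case: error estimate for the modified
quasi-interpolation away from the interface element `[κh, (κ+1)h]` and its left neighbour. -/
theorem stmt5 :
    ∃ C : ℝ, 0 < C ∧ ∀ h : ℝ, 0 < h → ∀ κ : ℤ, ∀ xstar : ℝ,
      xstar ∈ Set.Ioo ((κ : ℝ) * h) (((κ : ℝ) + 1) * h) →
      ∀ f0 f1 : ℝ → ℝ,
        ContDiff ℝ 3 f0 → ContDiff ℝ 3 f1 →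
        (∀ m : ℕ, m ≤ 3 → ∃ M : ℝ, ∀ x : ℝ, |iteratedDeriv m f0 x| ≤ M) →
        (∀ m : ℕ, m ≤ 3 → ∃ M : ℝ, ∀ x : ℝ, |iteratedDeriv m f1 x| ≤ M) →
        f0 xstar = f1 xstar →
        ∀ i : ℤ, i ≠ κ - 1 → i ≠ κ →
          ∀ x ∈ Set.Icc ((i : ℝ) * h) (((i : ℝ) + 1) * h),
            |(if x ≤ xstar then f0 x else f1 x) - IbStar1 h κ f0 f1 x|
              ≤ C * h ^ 3 * max (W3norm f0) (W3norm f1) := by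
  refine ⟨4, by norm_num, ?_⟩
  intro h hh κ xstar hxs f0 f1 hf0 hf1 hb0 hb1 _hmatch i hi1 hi2 x hx
  obtain ⟨hxl, hxr⟩ := hx
  obtain ⟨hs1, hs2⟩ := hxs
  have hMf0 : ∀ t, |iteratedDeriv 3 f0 t| ≤ max (W3norm f0) (W3norm f1) :=
    fun t => (w3_le hb0 t).trans (le_max_left _ _)
  have hMf1 : ∀ t, |iteratedDeriv 3 f1 t| ≤ max (W3norm f0) (W3norm f1) :=
    fun t => (w3_le hb1 t).trans (le_max_right _ _)
  have hgoal_eq : (4:ℝ) * h^3 * max (W3norm f0) (W3norm f1)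
      = 4 * (h^3 * max (W3norm f0) (W3norm f1)) := by ring
  rw [hgoal_eq]
  unfold IbStar1
  have hcases : i ≤ κ - 2 ∨ κ + 1 ≤ i := by omega
  rcases hcases with hA | hB
  · have hcast : (i:ℝ) + 1 ≤ (κ:ℝ) := by exact_mod_cast (by omega : i + 1 ≤ κ)
    have hxle : x ≤ xstar := by nlinarith
    rw [if_pos hxle]
    rcases lt_or_eq_of_le hxr with hlt | heq
    · refine final_est hh hxl hlt hf0 hMf0 _ ?_ ?_ (Or.inl ?_)
      · show (if i-2 ≤ κ-2 then muQ h f0 (i-2) else muQ h f1 (i-2)) = muQ h f0 (i-2)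
        rw [if_pos (by omega)]
      · show (if i-1 ≤ κ-2 then muQ h f0 (i-1) else muQ h f1 (i-1)) = muQ h f0 (i-1)
        rw [if_pos (by omega)]
      · show (if i ≤ κ-2 then muQ h f0 i else muQ h f1 i) = muQ h f0 i
        rw [if_pos (by omega)]
    · have hxl' : ((i+1 : ℤ):ℝ)*h ≤ x := by push_cast; linarith
      have hxr' : x < (((i+1 : ℤ):ℝ)+1)*h := by push_cast; nlinarith
      have hz : Nspl h 2 (i+1) x = 0 := by
        rw [N2_i hh hxl' hxr']
        have hz0 : x - ((i+1:ℤ):ℝ)*h = 0 := by push_cast; linarith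
        rw [hz0]
        simp
      refine final_est hh hxl' hxr' hf0 hMf0 _ ?_ ?_ (Or.inr hz)
      · show (if i+1-2 ≤ κ-2 then muQ h f0 (i+1-2) else muQ h f1 (i+1-2)) = muQ h f0 (i+1-2)
        rw [if_pos (by omega)]
      · show (if i+1-1 ≤ κ-2 then muQ h f0 (i+1-1) else muQ h f1 (i+1-1)) = muQ h f0 (i+1-1)
        rw [if_pos (by omega)]
  · have hcast : (κ:ℝ) + 1 ≤ (i:ℝ) := by exact_mod_cast (by omega : κ + 1 ≤ i)
    have hxgt : ¬ x ≤ xstar := by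
      push_neg
      nlinarith
    rw [if_neg hxgt]
    rcases lt_or_eq_of_le hxr with hlt | heq
    · refine final_est hh hxl hlt hf1 hMf1 _ ?_ ?_ (Or.inl ?_)
      · show (if i-2 ≤ κ-2 then muQ h f0 (i-2) else muQ h f1 (i-2)) = muQ h f1 (i-2)
        rw [if_neg (by omega)]
      · show (if i-1 ≤ κ-2 then muQ h f0 (i-1) else muQ h f1 (i-1)) = muQ h f1 (i-1)
        rw [if_neg (by omega)]
      · show (if i ≤ κ-2 then muQ h f0 i else muQ h f1 i) = muQ h f1 i
        rw [if_neg (by omega)]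
    · have hxl' : ((i+1 : ℤ):ℝ)*h ≤ x := by push_cast; linarith
      have hxr' : x < (((i+1 : ℤ):ℝ)+1)*h := by push_cast; nlinarith
      refine final_est hh hxl' hxr' hf1 hMf1 _ ?_ ?_ (Or.inl ?_)
      · show (if i+1-2 ≤ κ-2 then muQ h f0 (i+1-2) else muQ h f1 (i+1-2)) = muQ h f1 (i+1-2)
        rw [if_neg (by omega)]
      · show (if i+1-1 ≤ κ-2 then muQ h f0 (i+1-1) else muQ h f1 (i+1-1)) = muQ h f1 (i+1-1)
        rw [if_neg (by omega)]
      · show (if i+1 ≤ κ-2 then muQ h f0 (i+1) else muQ h f1 (i+1)) = muQ h f1 (i+1)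
        rw [if_neg (by omega)]
end
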